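/- Fix reals a,b,c > 0 and define polynomials P_w(a,b,c;z) in z by P_1 = 1 − a b z², P_2 = 1 − (a+b) z² + a b (1−c²) z⁴, and P_{w+1} = (1 − (1−c²) z²)·P_w − c² z²·P_{w−1} for w ≥ 2. Then for every integer w ≥ 1, the bridge generating function satisfies, as an identity of formal power series in z: P_w(a,b,c;z) · ( Σ_{n≥0} Z_{w,n,w}(a,b,c) zⁿ ) = b c^{w−1} z^w. -/

import Mathlib

open Filter
open scoped Classical

noncomputable section

/-- Step value of a Boolean step: `true` is an up step (+1), `false` a down step (−1). -/
def stepVal (x : Bool) : ℤ := if x then 1 else -1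

/-- Height of the walk after `k` steps. -/
def ht (σ : ℕ → Bool) (k : ℕ) : ℤ := ∑ i ∈ Finset.range k, stepVal (σ i)

/-- Extend a finite sequence of steps to `ℕ → Bool`. -/
def extFun {n : ℕ} (σ : Fin n → Bool) : ℕ → Bool :=
  fun i => if h : i < n then σ ⟨i, h⟩ else false

/-- The first `n` steps of `σ` stay in the strip `0 ≤ y ≤ w`. -/
def IsWalk (w n : ℕ) (σ : ℕ → Bool) : Prop :=
  ∀ k ≤ n, 0 ≤ ht σ k ∧ ht σ k ≤ (w : ℤ)

/-- Number of contacts with the bottom wall (excluding the origin):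
`m_a(φ) = #{1 ≤ k ≤ n : h_k = 0}`. -/
def ma (n : ℕ) (σ : ℕ → Bool) : ℕ :=
  ((Finset.Icc 1 n).filter (fun k => ht σ k = 0)).card

/-- Number of contacts with the top wall: `m_b(φ) = #{1 ≤ k ≤ n : h_k = w}`. -/
def mb (w n : ℕ) (σ : ℕ → Bool) : ℕ :=
  ((Finset.Icc 1 n).filter (fun k => ht σ k = (w : ℤ))).card

/-- Number of stiffness points: `m_c(φ) = #{1 ≤ k ≤ n−1 : σ_k = σ_{k+1}}`. -/
def mc (n : ℕ) (σ : ℕ → Bool) : ℕ :=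
  ((Finset.range (n - 1)).filter (fun i => σ i = σ (i + 1))).card

/-- Boltzmann weight of a walk: `W(φ) = a^{m_a} b^{m_b} c^{m_c}`. -/
def wt (w n : ℕ) (a b c : ℝ) (σ : ℕ → Bool) : ℝ :=
  a ^ ma n σ * b ^ mb w n σ * c ^ mc n σ

/-- Partition function `Z_{w,n}(a,b,c)`: sum of weights over all walks of length `n`
in the strip of width `w`. -/
def Z (w n : ℕ) (a b c : ℝ) : ℝ :=
  ∑ σ ∈ Finset.univ.filter (fun σ : Fin n → Bool => IsWalk w n (extFun σ)),
    wt w n a b c (extFun σ)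

/-- Fixed-endpoint partition function `Z_{w,n,h}(a,b,c)`: sum over walks of length `n`
in the strip of width `w` ending at height `h`. -/
def Zh (w n h : ℕ) (a b c : ℝ) : ℝ :=
  ∑ σ ∈ Finset.univ.filter
      (fun σ : Fin n → Bool => IsWalk w n (extFun σ) ∧ ht (extFun σ) n = (h : ℤ)),
    wt w n a b c (extFun σ)

end

noncomputable section

open Polynomial in
/-- The polynomials `P_w(a,b,c;z)`: `P_1 = 1 − a b z²`,
`P_2 = 1 − (a+b) z² + a b (1−c²) z⁴`, and
`P_{w+1} = (1 − (1−c²) z²)·P_w − c² z²·P_{w−1}` for `w ≥ 2`.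
(The value at `w = 0` is a dummy.) -/
def Pw (a b c : ℝ) : ℕ → Polynomial ℝ
  | 0 => 1
  | 1 => 1 - C (a * b) * X ^ 2
  | 2 => 1 - C (a + b) * X ^ 2 + C (a * b * (1 - c ^ 2)) * X ^ 4
  | (n + 3) =>
      (1 - C (1 - c ^ 2) * X ^ 2) * Pw a b c (n + 2) - C (c ^ 2) * X ^ 2 * Pw a b c (n + 1)

end

/-!
Split a walk into a shorter walk and its last step, which costs `z`, a factor `c` if it repeats
the previous step, and `a` or `b` if it ends on a wall. Hence the generating functions `U h`,
`D h` of walks ending at height `h` with an up, resp. down, last step satisfy a linear system.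
Eliminating it from the top wall downwards, `c P_k(1,b,c) U_w` and `c B_k U_w` are `b c^k z^k`
times `z (c U_{w-k-1} + D_{w-k-1})` and `D_{w-k}` respectively, where
`P_{k+1}(a,b,c) = P_k(1,b,c) - a B_{k+1}`. The bottom equation `D_0 = 1 + a z (c D_1 + U_1)`,
the only one containing the empty walk and the weight `a`, then turns `c P_w U_w` into
`c · b c^(w-1) z^w`.
-/

open Finset

noncomputable section

section Walks

variable {w n : ℕ}

lemma ht_succ (f : ℕ → Bool) (k : ℕ) : ht f (k + 1) = ht f k + stepVal (f k) :=
  sum_range_succ _ _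

lemma ht_congr {f g : ℕ → Bool} {k : ℕ} (hfg : ∀ i < k, f i = g i) : ht f k = ht g k :=
  sum_congr rfl fun i hi => by rw [hfg i (mem_range.1 hi)]

lemma isWalk_succ_iff (f : ℕ → Bool) :
    IsWalk w (n + 1) f ↔ IsWalk w n f ∧ 0 ≤ ht f (n + 1) ∧ ht f (n + 1) ≤ w := by
  refine ⟨fun hf => ⟨fun k hk => hf k (by omega), hf (n + 1) le_rfl⟩, ?_⟩
  rintro ⟨hf, hlast⟩ k hk
  rcases Nat.lt_or_eq_of_le hk with hk | rfl
  exacts [hf k (by omega), hlast]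

lemma isWalk_congr {f g : ℕ → Bool} (hfg : ∀ i < n, f i = g i) :
    IsWalk w n f ↔ IsWalk w n g := by
  refine forall₂_congr fun k hk => ?_
  rw [ht_congr fun i hi => hfg i (by omega)]

lemma card_filter_Icc_one_succ (p : ℕ → Prop) [DecidablePred p] (n : ℕ) :
    #{k ∈ Icc 1 (n + 1) | p k} = #{k ∈ Icc 1 n | p k} + if p (n + 1) then 1 else 0 := by
  rw [card_filter, card_filter, sum_Icc_succ_top (by omega)]

lemma ma_succ (f : ℕ → Bool) : ma (n + 1) f = ma n f + if ht f (n + 1) = 0 then 1 else 0 :=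
  card_filter_Icc_one_succ _ n

lemma mb_succ (f : ℕ → Bool) :
    mb w (n + 1) f = mb w n f + if ht f (n + 1) = w then 1 else 0 :=
  card_filter_Icc_one_succ _ n

lemma mc_succ (f : ℕ → Bool) :
    mc (n + 1) f = mc n f + if n ≠ 0 ∧ f (n - 1) = f n then 1 else 0 := by
  rcases n with _ | n
  · simp [mc]
  · simp only [mc, card_filter, Nat.add_sub_cancel, sum_range_succ]
    simp

def contactWeight (w : ℕ) (a b : ℝ) (y : ℤ) : ℝ :=
  (if y = 0 then a else 1) * (if y = w then b else 1)

lemma wt_succ (a b c : ℝ) (f : ℕ → Bool) :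
    wt w (n + 1) a b c f = wt w n a b c f *
      (contactWeight w a b (ht f (n + 1)) * if n ≠ 0 ∧ f (n - 1) = f n then c else 1) := by
  simp only [wt, contactWeight, ma_succ, mb_succ, mc_succ, pow_add]
  split_ifs <;> ring

lemma wt_congr (a b c : ℝ) {f g : ℕ → Bool} (hfg : ∀ i < n, f i = g i) :
    wt w n a b c f = wt w n a b c g := by
  have hht : ∀ k ≤ n, ht f k = ht g k := fun k hk => ht_congr fun i hi => hfg i (by omega)
  have hma : ma n f = ma n g := by
    unfold ma; congr 1; exact filter_congr fun k hk => by rw [hht k (mem_Icc.1 hk).2]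
  have hmb : mb w n f = mb w n g := by
    unfold mb; congr 1; exact filter_congr fun k hk => by rw [hht k (mem_Icc.1 hk).2]
  have hmc : mc n f = mc n g := by
    unfold mc; congr 1
    exact filter_congr fun i hi => by
      have := mem_range.1 hi
      rw [hfg i (by omega), hfg (i + 1) (by omega)]
  simp only [wt, hma, hmb, hmc]

end Walks

section Snoc

variable {w n : ℕ} (σ : Fin n → Bool) (s : Bool)

lemma extFun_snoc_of_lt {i : ℕ} (hi : i < n) : extFun (Fin.snoc σ s) i = extFun σ i := by
  simp [extFun, hi, Nat.lt_succ_of_lt hi, Fin.snoc]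

lemma extFun_snoc_self : extFun (Fin.snoc σ s) n = s := by
  simp [extFun, Fin.snoc]

lemma extFun_last (σ : Fin (n + 1) → Bool) : extFun σ n = σ (Fin.last n) := by
  simp [extFun, Fin.last]

lemma ht_snoc_succ : ht (extFun (Fin.snoc σ s)) (n + 1) = ht (extFun σ) n + stepVal s := by
  rw [ht_succ, extFun_snoc_self, ht_congr fun i hi => extFun_snoc_of_lt σ s hi]

def walksTo (w n : ℕ) (h : ℤ) : Finset (Fin n → Bool) :=
  {σ | IsWalk w n (extFun σ) ∧ ht (extFun σ) n = h}

lemma snoc_mem_walksTo_iff {h : ℤ} :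
    Fin.snoc σ s ∈ walksTo w (n + 1) h ↔
      σ ∈ walksTo w n (h - stepVal s) ∧ 0 ≤ h ∧ h ≤ w := by
  simp only [walksTo, mem_filter, mem_univ, true_and, isWalk_succ_iff, ht_snoc_succ,
    isWalk_congr fun i hi => extFun_snoc_of_lt σ s hi]
  constructor
  · rintro ⟨⟨hσ, h0, hw⟩, hh⟩; exact ⟨⟨hσ, by omega⟩, by omega, by omega⟩
  · rintro ⟨⟨hσ, hh⟩, h0, hw⟩; exact ⟨⟨hσ, by omega, by omega⟩, by omega⟩

end Snoc

section LastStep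

variable {w n : ℕ} {a b c : ℝ}

lemma Zh_eq_sum_walksTo (h : ℕ) :
    Zh w n h a b c = ∑ σ ∈ walksTo w n h, wt w n a b c (extFun σ) :=
  rfl

/-- The empty walk has `extFun σ (0 - 1) = false`, so it counts as ending with a down step. -/
def Zlast (w n : ℕ) (a b c : ℝ) (h : ℤ) (s : Bool) : ℝ :=
  ∑ σ ∈ walksTo w n h, if extFun σ (n - 1) = s then wt w n a b c (extFun σ) else 0

lemma Zh_eq_Zlast_add (h : ℕ) :
    Zh w n h a b c = Zlast w n a b c h true + Zlast w n a b c h false := by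
  rw [Zh_eq_sum_walksTo, Zlast, Zlast, ← sum_add_distrib]
  refine sum_congr rfl fun σ _ => ?_
  cases extFun σ (n - 1) <;> simp

lemma Zlast_zero (h : ℤ) (s : Bool) :
    Zlast w 0 a b c h s = if h = 0 ∧ s = false then 1 else 0 := by
  have hwalk : ∀ σ : Fin 0 → Bool, IsWalk w 0 (extFun σ) := fun σ k hk => by
    simp [Nat.le_zero.1 hk, ht]
  by_cases h0 : h = 0 <;> cases s <;>
    simp [Zlast, walksTo, hwalk, ht, extFun, wt, ma, mb, mc, h0, eq_comm (a := (0 : ℤ))]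

lemma Zlast_eq_zero_of_outside (h : ℤ) (s : Bool) (hh : h < 0 ∨ (w : ℤ) < h) :
    Zlast w n a b c h s = 0 :=
  sum_eq_zero fun σ hσ => by
    simp only [walksTo, mem_filter] at hσ
    have := hσ.2.1 n le_rfl
    omega

end LastStep

section LastStepRecursion

variable {w n : ℕ} {a b c : ℝ} (σ : Fin n → Bool) (s : Bool)

lemma wt_snoc_of_mem_walksTo {h : ℤ} (hσ : σ ∈ walksTo w n (h - stepVal s)) (h0 : 0 ≤ h) :
    wt w (n + 1) a b c (extFun (Fin.snoc σ s)) = wt w n a b c (extFun σ) *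
      (contactWeight w a b h * if extFun σ (n - 1) = s then c else 1) := by
  simp only [walksTo, mem_filter] at hσ
  have hend : ht (extFun σ) n + stepVal s = h := by linarith [hσ.2.2]
  rw [wt_succ, wt_congr a b c fun i hi => extFun_snoc_of_lt σ s hi, ht_snoc_succ, hend,
    extFun_snoc_self]
  rcases n with _ | n
  · -- a down step after the empty walk would leave the strip
    have hlast : extFun σ 0 = false := by simp [extFun]
    cases s
    · simp [ht, stepVal] at hend
      omega
    · simp [hlast]
  · rw [extFun_snoc_of_lt σ s (by omega)]
    simp

lemma snoc_init_of_extFun_eq (σ' : Fin (n + 1) → Bool) (hs : extFun σ' n = s) :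
    Fin.snoc (Fin.init σ') s = σ' := by
  rw [← hs, extFun_last, Fin.snoc_init_self]

lemma Zlast_succ {h : ℤ} (h0 : 0 ≤ h) (hw : h ≤ w) :
    Zlast w (n + 1) a b c h s = contactWeight w a b h *
      (c * Zlast w n a b c (h - stepVal s) s + Zlast w n a b c (h - stepVal s) (!s)) := by
  have hsum : Zlast w (n + 1) a b c h s =
      ∑ σ ∈ walksTo w n (h - stepVal s), wt w (n + 1) a b c (extFun (Fin.snoc σ s)) := by
    rw [Zlast, ← sum_filter, Nat.add_sub_cancel]
    refine sum_nbij' Fin.init (Fin.snoc · s) (fun σ' hσ' => ?_) (fun σ hσ => ?_)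
      (fun σ' hσ' => ?_) (fun σ _ => Fin.init_snoc _ _) (fun σ' hσ' => ?_)
    · rw [mem_filter, ← snoc_init_of_extFun_eq s σ' hσ'.2, snoc_mem_walksTo_iff] at hσ'
      exact hσ'.1.1
    · exact mem_filter.2
        ⟨(snoc_mem_walksTo_iff σ s).2 ⟨hσ, h0, hw⟩, extFun_snoc_self σ s⟩
    · exact snoc_init_of_extFun_eq s σ' (mem_filter.1 hσ').2
    · rw [snoc_init_of_extFun_eq s σ' (mem_filter.1 hσ').2]
  rw [hsum, Zlast, Zlast, mul_sum, ← sum_add_distrib, mul_sum]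
  refine sum_congr rfl fun σ hσ => ?_
  rw [wt_snoc_of_mem_walksTo σ s hσ h0]
  cases s <;> cases extFun σ (n - 1) <;> simp <;> ring

end LastStepRecursion

section Polynomials

open Polynomial

/-- Up to sign, `Bw b c (k + 1)` is the coefficient of the bottom weight `a` in `Pw a b c (k + 1)`
(`Pw_succ_eq`). -/
def Bw (b c : ℝ) : ℕ → ℝ[X]
  | 0 => 0
  | k + 1 => X ^ 2 * (C (c ^ 2) * Bw b c k + C (if k = 0 then b else 1) * Pw 1 b c k)

lemma Pw_succ_eq (a b c : ℝ) : ∀ k, Pw a b c (k + 1) = Pw 1 b c k - C a * Bw b c (k + 1)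
  | 0 => by simp [Pw, Bw]; ring
  | 1 => by simp [Pw, Bw]; ring
  | k + 2 => by
    rw [show Pw a b c (k + 3) = (1 - C (1 - c ^ 2) * X ^ 2) * Pw a b c (k + 2) -
        C (c ^ 2) * X ^ 2 * Pw a b c (k + 1) from rfl,
      show Bw b c (k + 3) = X ^ 2 * (C (c ^ 2) * Bw b c (k + 2) + C 1 * Pw 1 b c (k + 2)) from rfl,
      Pw_succ_eq a b c (k + 1), Pw_succ_eq a b c k, Pw_succ_eq 1 b c (k + 1),
      show Bw b c (k + 2) = X ^ 2 * (C (c ^ 2) * Bw b c (k + 1) + C 1 * Pw 1 b c (k + 1)) from rfl,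
      Pw_succ_eq 1 b c k]
    simp only [map_sub, map_one]
    ring

end Polynomials

section StripEquations

open Polynomial

variable {R : Type*} [CommRing R] [Algebra ℝ R]

lemma aeval_Bw_succ (x : R) (b c : ℝ) (k : ℕ) :
    aeval x (Bw b c (k + 1)) =
      x ^ 2 *
        (c ^ 2 • aeval x (Bw b c k) + (if k = 0 then b else 1) • aeval x (Pw 1 b c k)) := by
  simp [Bw, Algebra.smul_def]

/-- `U h` and `D h` stand for the generating functions, in `x`, of walks ending at height `h`
with an up, resp. down, last step. -/
structure StripEquations (w : ℕ) (a b c : ℝ) (x : R) (U D : ℤ → R) : Prop where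
  up : ∀ h : ℤ, 1 ≤ h → h ≤ w →
    U h = (if h = w then b else 1) • (x * (c • U (h - 1) + D (h - 1)))
  down : ∀ h : ℤ, 1 ≤ h → h < w → D h = x * (c • D (h + 1) + U (h + 1))
  up_zero : U 0 = 0
  down_zero : D 0 = 1 + a • (x * (c • D 1 + U 1))
  down_top : D w = 0

namespace StripEquations

variable {w : ℕ} {a b c : ℝ} {x : R} {U D : ℤ → R}

lemma transfer (hS : StripEquations w a b c x U D) :
    ∀ k < w, c • (aeval x (Pw 1 b c k) * U w) =
        (b * c ^ (k + 1)) • (x ^ (k + 1) * (c • U (w - k - 1) + D (w - k - 1))) ∧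
      c • (aeval x (Bw b c k) * U w) = (b * c ^ k) • (x ^ k * D (w - k))
  | 0, hw => by
    have hup := hS.up w (by exact_mod_cast hw) le_rfl
    rw [if_pos rfl] at hup
    refine ⟨?_, by simp [Bw, hS.down_top]⟩
    simp only [Pw, map_one, one_mul, hup, smul_smul, Nat.cast_zero, sub_zero, zero_add, pow_one]
    ring_nf
  | k + 1, hk => by
    obtain ⟨hA, hB⟩ := hS.transfer k (by omega)
    have hD := hS.down (w - k - 1) (by omega) (by omega)
    have hUk := hS.up (w - k) (by omega) (by omega)
    have hUk1 := hS.up (w - k - 1) (by omega) (by omega)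
    have hβ : ((w : ℤ) - k = w) ↔ k = 0 := by omega
    simp only [hβ, show ¬((w : ℤ) - k - 1 = w) by omega, if_false, one_smul] at hUk hUk1
    have hPw := congrArg (aeval x) (Pw_succ_eq 1 b c k)
    have hBw := aeval_Bw_succ x b c k
    simp only [map_sub, map_one, one_mul] at hPw
    rw [show (w : ℤ) - k - 1 + 1 = w - k by ring] at hD
    push_cast
    simp only [sub_sub, Algebra.smul_def, map_mul, map_pow] at hA hB hD hUk hUk1 hBw ⊢
    have hB' : algebraMap ℝ R c * (aeval x (Bw b c (k + 1)) * U w) =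
        algebraMap ℝ R b * algebraMap ℝ R c ^ (k + 1) * (x ^ (k + 1) * D (w - (k + 1))) := by
      rw [hBw]
      linear_combination (x ^ 2 * algebraMap ℝ R c ^ 2) * hB +
        (x ^ 2 * algebraMap ℝ R (if k = 0 then b else 1)) * hA -
        (algebraMap ℝ R b * algebraMap ℝ R c ^ (k + 1) * x ^ (k + 1)) * hD -
        (algebraMap ℝ R b * algebraMap ℝ R c ^ (k + 1) * x ^ (k + 2)) * hUk
    refine ⟨?_, hB'⟩
    rw [hPw]
    linear_combination
      hA - hB' + (algebraMap ℝ R b * algebraMap ℝ R c ^ (k + 2) * x ^ (k + 1)) * hUk1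

lemma aeval_Pw_mul (hS : StripEquations w a b c x U D) (hw : 1 ≤ w) (hc : c ≠ 0) :
    aeval x (Pw a b c w) * U w = (b * c ^ (w - 1)) • x ^ w := by
  obtain ⟨m, rfl⟩ : ∃ m, w = m + 1 := ⟨w - 1, by omega⟩
  obtain ⟨hA, hB⟩ := hS.transfer m (by omega)
  have hU1 := hS.up 1 le_rfl (by omega)
  have hβ : (1 : ℤ) = ((m + 1 : ℕ) : ℤ) ↔ m = 0 := by omega
  simp only [hβ, sub_self, hS.up_zero, smul_zero, zero_add] at hU1
  have hD0 := hS.down_zero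
  have hPw := congrArg (aeval x) (Pw_succ_eq a b c m)
  simp only [map_sub, map_mul, aeval_C, aeval_Bw_succ] at hPw
  rw [Nat.add_sub_cancel]
  apply smul_right_injective R hc
  push_cast at hA hB ⊢
  simp only [add_sub_cancel_left, sub_self, hS.up_zero, smul_zero, zero_add] at hA hB
  simp only [Algebra.smul_def, map_mul, map_pow] at hA hB hU1 hD0 hPw ⊢
  rw [hPw]
  linear_combination
    (1 - algebraMap ℝ R a * x ^ 2 * algebraMap ℝ R (if m = 0 then b else 1)) * hA -
    (algebraMap ℝ R a * x ^ 2 * algebraMap ℝ R c ^ 2) * hB +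
    (algebraMap ℝ R b * algebraMap ℝ R c ^ (m + 1) * x ^ (m + 1)) * hD0 +
    (algebraMap ℝ R b * algebraMap ℝ R c ^ (m + 1) * x ^ (m + 1) * algebraMap ℝ R a * x) * hU1

end StripEquations

end StripEquations

section GeneratingFunctions

variable {w : ℕ} {a b c : ℝ}

def lastStepGF (w : ℕ) (a b c : ℝ) (h : ℤ) (s : Bool) : PowerSeries ℝ :=
  PowerSeries.mk fun n => Zlast w n a b c h s

lemma lastStepGF_eq {h : ℤ} (h0 : 0 ≤ h) (hw : h ≤ w) (s : Bool) :
    lastStepGF w a b c h s = (if h = 0 ∧ s = false then 1 else 0) + contactWeight w a b h •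
      (PowerSeries.X * (c • lastStepGF w a b c (h - stepVal s) s +
        lastStepGF w a b c (h - stepVal s) (!s))) := by
  ext (_ | n)
  · simp [lastStepGF, Zlast_zero, apply_ite (PowerSeries.constantCoeff (R := ℝ))]
  · simp [lastStepGF, Zlast_succ s h0 hw, PowerSeries.coeff_succ_X_mul,
      apply_ite (PowerSeries.coeff (R := ℝ) (n + 1))]

lemma lastStepGF_eq_zero_of_outside {h : ℤ} (hh : h < 0 ∨ (w : ℤ) < h) (s : Bool) :
    lastStepGF w a b c h s = 0 := by
  ext n
  simp [lastStepGF, Zlast_eq_zero_of_outside h s hh]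

lemma stripEquations_lastStepGF (hw : 1 ≤ w) :
    StripEquations w a b c PowerSeries.X (lastStepGF w a b c · true)
      (lastStepGF w a b c · false) where
  up h h1 hhw := by
    rw [lastStepGF_eq (by omega) hhw]
    simp [contactWeight, stepVal, show h ≠ 0 by omega]
  down h h1 hhw := by
    rw [lastStepGF_eq (by omega) hhw.le]
    simp [contactWeight, stepVal, show h ≠ 0 by omega, hhw.ne]
  up_zero := by
    rw [lastStepGF_eq le_rfl (by omega), lastStepGF_eq_zero_of_outside (by simp [stepVal]),
      lastStepGF_eq_zero_of_outside (by simp [stepVal])]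
    simp
  down_zero := by
    rw [lastStepGF_eq le_rfl (by omega)]
    simp [contactWeight, stepVal, show (0 : ℤ) ≠ w by omega]
  down_top := by
    rw [lastStepGF_eq (by omega) le_rfl, lastStepGF_eq_zero_of_outside (by simp [stepVal]),
      lastStepGF_eq_zero_of_outside (by simp [stepVal])]
    simp [show w ≠ 0 by omega]

end GeneratingFunctions

end

theorem bridge_generating_function_general (a b c : ℝ) (hc : 0 < c)
    (w : ℕ) (hw : 1 ≤ w) :
    ((Pw a b c w : PowerSeries ℝ) * PowerSeries.mk (fun n => Zh w n w a b c)) =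
      PowerSeries.C (b * c ^ (w - 1)) * PowerSeries.X ^ w := by
  have hS := stripEquations_lastStepGF (a := a) (b := b) (c := c) hw
  have hZ : PowerSeries.mk (fun n => Zh w n w a b c) =
      lastStepGF w a b c w true + lastStepGF w a b c w false := by
    ext n
    simp [lastStepGF, Zh_eq_Zlast_add]
  have hcoe : (Pw a b c w : PowerSeries ℝ) = Polynomial.aeval PowerSeries.X (Pw a b c w) := by
    rw [Polynomial.aeval_def, ← Polynomial.eval₂_C_X_eq_coe]
    rfl
  rw [hZ, hS.down_top, add_zero, hcoe, hS.aeval_Pw_mul hw hc.ne', PowerSeries.smul_eq_C_mul]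

/-- `P_w(a,b,c;z) · (Σ_n Z_{w,n,w} zⁿ) = b c^{w−1} z^w` as formal power
series. -/
theorem bridge_generating_function (a b c : ℝ) (ha : 0 < a) (hb : 0 < b) (hc : 0 < c)
    (w : ℕ) (hw : 1 ≤ w) :
    ((Pw a b c w : PowerSeries ℝ) * PowerSeries.mk (fun n => Zh w n w a b c)) =
      PowerSeries.C (b * c ^ (w - 1)) * PowerSeries.X ^ w :=
  bridge_generating_function_general a b c hc w hw
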